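/- Soundness of the extensions of DmbC with respect to swap Kripke models: for each logic L ∈ {DmbCciw, DmbCci, DbC, DCi} and every set of formulas Γ ∪ {φ} ⊆ For(Σ), if Γ ⊢_L φ then Γ ⊨_L φ. -/

import Mathlib

/-- Formulas over the signature Σ = {∧, ∨, →, ¬, ∘, O}, with countably many
propositional variables. -/
inductive Form : Type
  | var : ℕ → Form
  | and : Form → Form → Form
  | or : Form → Form → Form
  | imp : Form → Form → Form
  | neg : Form → Form
  | circ : Form → Form
  | obl : Form → Form

namespace Form
/-- ⊥_α := (α ∧ ¬α) ∧ ∘α -/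
def bot (α : Form) : Form := (α.and α.neg).and α.circ
end Form

/-- Theorems of the extension of DmbC by the extra axiom schemas in `E`:
CPL⁺ axioms, (EM), (bc), (O-K), (O-E), the axioms in `E`,
with rules Modus Ponens and O-necessitation. -/
inductive ThmExt (E : Form → Prop) : Form → Prop
  | A1 (α β : Form) : ThmExt E (α.imp (β.imp α))
  | A2 (α β γ : Form) : ThmExt E ((α.imp (β.imp γ)).imp ((α.imp β).imp (α.imp γ)))
  | A3 (α β : Form) : ThmExt E (α.imp (β.imp (α.and β)))
  | A4 (α β : Form) : ThmExt E ((α.and β).imp α)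
  | A5 (α β : Form) : ThmExt E ((α.and β).imp β)
  | A6 (α β : Form) : ThmExt E (α.imp (α.or β))
  | A7 (α β : Form) : ThmExt E (β.imp (α.or β))
  | A8 (α β γ : Form) : ThmExt E ((α.imp γ).imp ((β.imp γ).imp ((α.or β).imp γ)))
  | A9 (α β : Form) : ThmExt E (((α.imp β).imp α).imp α)
  | EM (α : Form) : ThmExt E (α.or α.neg)
  | bc (α β : Form) : ThmExt E (α.circ.imp (α.imp (α.neg.imp β)))
  | OK (α β : Form) : ThmExt E ((α.imp β).obl.imp (α.obl.imp β.obl))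
  | OE (α : Form) : ThmExt E (α.bot.obl.imp α.bot)
  | extra {φ : Form} : E φ → ThmExt E φ
  | mp {α β : Form} : ThmExt E (α.imp β) → ThmExt E α → ThmExt E β
  | nec {α : Form} : ThmExt E α → ThmExt E α.obl

/-- Instances of axiom (ciw) ∘α ∨ (α ∧ ¬α). -/
def ciwAx (φ : Form) : Prop := ∃ α : Form, φ = α.circ.or (α.and α.neg)

/-- Instances of axiom (ci) ¬∘α → (α ∧ ¬α). -/
def ciAx (φ : Form) : Prop := ∃ α : Form, φ = α.circ.neg.imp (α.and α.neg)

/-- Instances of axiom (cf) ¬¬α → α. -/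
def cfAx (φ : Form) : Prop := ∃ α : Form, φ = α.neg.neg.imp α

/-- The four extensions of DmbC considered here. -/
inductive ExtLogic : Type
  | DmbCciw | DmbCci | DbC | DCi

/-- The extra axiom schemas of each logic. -/
def extAx : ExtLogic → Form → Prop
  | .DmbCciw => ciwAx
  | .DmbCci => ciAx
  | .DbC => cfAx
  | .DCi => fun φ => ciAx φ ∨ cfAx φ

/-- conj γ [γ₂,…,γ_k] = γ ∧ γ₂ ∧ … ∧ γ_k -/
def conj (γ : Form) : List Form → Form
  | [] => γ
  | δ :: l => γ.and (conj δ l)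

/-- Γ ⊢_L φ iff ⊢_L φ or ⊢_L (γ₁ ∧ … ∧ γ_k) → φ for some γ₁,…,γ_k ∈ Γ, k ≥ 1. -/
def DerivExt (L : ExtLogic) (Γ : Set Form) (φ : Form) : Prop :=
  ThmExt (extAx L) φ ∨ ∃ (γ : Form) (l : List Form),
    (∀ δ ∈ γ :: l, δ ∈ Γ) ∧ ThmExt (extAx L) ((conj γ l).imp φ)

/-- The three snapshots T = (1,0), t = (1,1), F = (0,1). -/
inductive SV : Type
  | T | t | F
deriving DecidableEq

/-- First coordinate of a snapshot. -/
def SV.p1 : SV → Bool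
  | .T => true | .t => true | .F => false

/-- Second coordinate of a snapshot. -/
def SV.p2 : SV → Bool
  | .T => false | .t => true | .F => true

/-- Designated values: D = {T, t}, i.e. first coordinate is 1. -/
def SV.desig (a : SV) : Prop := a.p1 = true

/-- Membership condition for the multioperation interpreting ¬ in each logic:
¬̃ for DmbCciw and DmbCci, ¬̃₁ for DbC and DCi.  Here `c` is the candidate value
of ¬α and `a` the value of α. -/
def negCond : ExtLogic → SV → SV → Prop
  | .DmbCciw, c, a => c.p1 = a.p2
  | .DmbCci, c, a => c.p1 = a.p2
  | .DbC, c, a => c.p1 = a.p2 ∧ c.p2 ≤ a.p1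
  | .DCi, c, a => c.p1 = a.p2 ∧ c.p2 ≤ a.p1

/-- Membership condition for the multioperation interpreting ∘ in each logic:
∘̃₁ for DmbCciw, ∘̃₂ for DmbCci and DCi, ∘̃ for DbC. -/
def circCond : ExtLogic → SV → SV → Prop
  | .DmbCciw, c, a => c.p1 = !(a.p1 && a.p2)
  | .DmbCci, c, a => c.p1 = !(a.p1 && a.p2) ∧ c.p2 = (a.p1 && a.p2)
  | .DbC, c, a => c.p1 ≤ !(a.p1 && a.p2)
  | .DCi, c, a => c.p1 = !(a.p1 && a.p2) ∧ c.p2 = (a.p1 && a.p2)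

/-- Swap Kripke model conditions for the logic L on a serial frame (W,R) with
valuations v_w : Form → SV. -/
structure IsModelExt (L : ExtLogic) {W : Type} (R : W → W → Prop)
    (v : W → Form → SV) : Prop where
  serial : ∀ w, ∃ w', R w w'
  and_ : ∀ w α β, (v w (α.and β)).p1 = ((v w α).p1 && (v w β).p1)
  or_ : ∀ w α β, (v w (α.or β)).p1 = ((v w α).p1 || (v w β).p1)
  imp_ : ∀ w α β, (v w (α.imp β)).p1 = (!(v w α).p1 || (v w β).p1)
  neg_ : ∀ w α, negCond L (v w α.neg) (v w α)
  circ_ : ∀ w α, circCond L (v w α.circ) (v w α)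
  obl_ : ∀ w α, ((v w α.obl).p1 = true ↔ ∀ w', R w w' → (v w' α).p1 = true)

/-- Γ ⊨_L φ : semantic consequence over all swap Kripke models for L. -/
def SemExt (L : ExtLogic) (Γ : Set Form) (φ : Form) : Prop :=
  ∀ (W : Type) (R : W → W → Prop) (v : W → Form → SV), Nonempty W →
    IsModelExt L R v → ∀ w : W, (∀ γ ∈ Γ, (v w γ).desig) → (v w φ).desig

/-! Every axiom is valid because each of the three multioperations for `¬` fixes the first
coordinate of `¬α` to the second one of `α`, and each of those for `∘` makes `∘α` false
whenever `α` has the value `t`. Hence, reading only first coordinates, the models validate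
classical positive logic, (EM) and (bc); (O-K) and (O-E) hold by the usual Kripke argument
and seriality, and the extra axioms by the refined multioperations `¬̃₁`, `∘̃₁`, `∘̃₂`. -/

theorem SV.p1_or_p2 (a : SV) : (a.p1 || a.p2) = true := by
  cases a <;> rfl

theorem negCond.p1_eq {L : ExtLogic} {c a : SV} (h : negCond L c a) : c.p1 = a.p2 := by
  cases L
  exacts [h, h, h.1, h.1]

theorem circCond.p2_eq_false {L : ExtLogic} {c a : SV} (h : circCond L c a)
    (hc : c.p1 = true) (ha : a.p1 = true) : a.p2 = false := by
  cases L <;> cases a <;> cases c <;> simp_all [circCond, SV.p1, SV.p2, Bool.le_iff_imp]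

namespace IsModelExt

variable {L : ExtLogic} {W : Type} {R : W → W → Prop} {v : W → Form → SV} {w : W}
  {α β : Form}

theorem desig_and (h : IsModelExt L R v) :
    (v w (α.and β)).desig ↔ (v w α).desig ∧ (v w β).desig := by
  simp only [SV.desig, h.and_, Bool.and_eq_true]

theorem desig_or (h : IsModelExt L R v) :
    (v w (α.or β)).desig ↔ (v w α).desig ∨ (v w β).desig := by
  simp only [SV.desig, h.or_, Bool.or_eq_true]

theorem desig_imp (h : IsModelExt L R v) :
    (v w (α.imp β)).desig ↔ ((v w α).desig → (v w β).desig) := by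
  simp only [SV.desig, h.imp_]
  cases (v w α).p1 <;> simp

theorem desig_neg (h : IsModelExt L R v) : (v w α.neg).desig ↔ (v w α).p2 = true := by
  rw [SV.desig, (h.neg_ w α).p1_eq]

theorem desig_obl (h : IsModelExt L R v) :
    (v w α.obl).desig ↔ ∀ w', R w w' → (v w' α).desig :=
  h.obl_ w α

theorem not_desig_neg_of_desig_circ (h : IsModelExt L R v) (hcirc : (v w α.circ).desig)
    (hα : (v w α).desig) : ¬(v w α.neg).desig := by
  rw [h.desig_neg, (h.circ_ w α).p2_eq_false hcirc hα]
  exact Bool.false_ne_true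

theorem not_desig_bot (h : IsModelExt L R v) : ¬(v w α.bot).desig := by
  rw [Form.bot, h.desig_and, h.desig_and]
  rintro ⟨⟨hα, hnα⟩, hcirc⟩
  exact h.not_desig_neg_of_desig_circ hcirc hα hnα

theorem desig_conj (h : IsModelExt L R v) (γ : Form) (l : List Form) :
    (v w (conj γ l)).desig ↔ ∀ δ ∈ γ :: l, (v w δ).desig := by
  induction l generalizing γ with
  | nil => simp [conj]
  | cons δ l ih => simp only [conj, h.desig_and, ih, List.forall_mem_cons]

theorem desig_EM (h : IsModelExt L R v) : (v w (α.or α.neg)).desig := by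
  rw [h.desig_or, h.desig_neg, SV.desig, ← Bool.or_eq_true]
  exact (v w α).p1_or_p2

theorem desig_bc (h : IsModelExt L R v) : (v w (α.circ.imp (α.imp (α.neg.imp β)))).desig := by
  simp only [h.desig_imp]
  exact fun hcirc hα hnα => absurd hnα (h.not_desig_neg_of_desig_circ hcirc hα)

theorem desig_OK (h : IsModelExt L R v) :
    (v w ((α.imp β).obl.imp (α.obl.imp β.obl))).desig := by
  simp only [h.desig_imp, h.desig_obl]
  exact fun himp hα w' hw' => himp w' hw' (hα w' hw')

theorem desig_OE (h : IsModelExt L R v) : (v w (α.bot.obl.imp α.bot)).desig := by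
  rw [h.desig_imp, h.desig_obl]
  obtain ⟨w', hw'⟩ := h.serial w
  exact fun hobl => absurd (hobl w' hw') h.not_desig_bot

theorem desig_ciwAx (h : IsModelExt L R v)
    (hcirc : (v w α.circ).p1 = !((v w α).p1 && (v w α).p2)) :
    (v w (α.circ.or (α.and α.neg))).desig := by
  rw [h.desig_or, h.desig_and, h.desig_neg]
  simp only [SV.desig, hcirc]
  cases (v w α).p1 <;> cases (v w α).p2 <;> simp

theorem desig_ciAx (h : IsModelExt L R v)
    (hcirc : (v w α.circ).p2 = ((v w α).p1 && (v w α).p2)) :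
    (v w (α.circ.neg.imp (α.and α.neg))).desig := by
  rw [h.desig_imp, h.desig_neg, h.desig_and, h.desig_neg, hcirc, Bool.and_eq_true]
  exact id

theorem desig_cfAx (h : IsModelExt L R v) (hneg : (v w α.neg).p2 ≤ (v w α).p1) :
    (v w (α.neg.neg.imp α)).desig := by
  rw [h.desig_imp, h.desig_neg]
  exact Bool.le_iff_imp.mp hneg

theorem desig_of_extAx (h : IsModelExt L R v) {φ : Form} (hφ : extAx L φ) :
    (v w φ).desig := by
  cases L with
  | DmbCciw => obtain ⟨α, rfl⟩ := hφ; exact h.desig_ciwAx (h.circ_ w α)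
  | DmbCci => obtain ⟨α, rfl⟩ := hφ; exact h.desig_ciAx (h.circ_ w α).2
  | DbC => obtain ⟨α, rfl⟩ := hφ; exact h.desig_cfAx (h.neg_ w α).2
  | DCi =>
    rcases hφ with ⟨α, rfl⟩ | ⟨α, rfl⟩
    · exact h.desig_ciAx (h.circ_ w α).2
    · exact h.desig_cfAx (h.neg_ w α).2

theorem desig_of_thmExt (h : IsModelExt L R v) {φ : Form} (hφ : ThmExt (extAx L) φ) (w : W) :
    (v w φ).desig := by
  induction hφ generalizing w with
  | EM => exact h.desig_EM
  | bc => exact h.desig_bc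
  | OK => exact h.desig_OK
  | OE => exact h.desig_OE
  | extra hφ => exact h.desig_of_extAx hφ
  | mp _ _ ihimp ih => exact h.desig_imp.mp (ihimp w) (ih w)
  | nec _ ih => exact h.desig_obl.mpr fun w' _ => ih w'
  | _ => simp only [h.desig_imp, h.desig_and, h.desig_or]; tauto

end IsModelExt

/-- Soundness of DmbCciw, DmbCci, DbC, DCi w.r.t. swap Kripke models. -/
theorem ext_soundness (L : ExtLogic) (Γ : Set Form) (φ : Form) :
    DerivExt L Γ φ → SemExt L Γ φ := by
  rintro (hφ | ⟨γ, l, hΓl, hφ⟩) W R v _ h w hΓ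
  · exact h.desig_of_thmExt hφ w
  · exact h.desig_imp.mp (h.desig_of_thmExt hφ w) <|
      (h.desig_conj γ l).mpr fun δ hδ => hΓ δ (hΓl δ hδ)
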